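/- Let G' be a signed graph whose positive edges form a spanning tree T, and let X' be the set of negative edges. For x ∈ X' let C_x be the unique circuit of T ∪ {x}, and for A ⊆ X' let C_A be the symmetric difference of the circuits C_a over a ∈ A. Then for every A ⊆ X', the subgraph C_A contains every edge of A, and also every edge s such that {s, a} is a 2-edge-cut of G' for some a ∈ A. -/

import Mathlib

open Finset
open scoped Classical

noncomputable section

namespace SignedCircuitCover

variable {V E : Type} [Fintype V] [Fintype E] [DecidableEq V] [DecidableEq E]

/-- `e` is a loop. -/
def IsLoop (ends : E → Sym2 V) (e : E) : Prop := (ends e).IsDiag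

/-- The vertices incident with an edge of `F`. -/
def support (ends : E → Sym2 V) (F : Finset E) : Finset V :=
  Finset.univ.filter fun v => ∃ e ∈ F, v ∈ ends e

/-- Degree of `v` in the subgraph with edge set `F` (a loop counts twice). -/
def degree (ends : E → Sym2 V) (F : Finset E) (v : V) : ℕ :=
  ∑ e ∈ F, (if ends e = Sym2.diag v then 2 else if v ∈ ends e then 1 else 0)

/-- Reachability inside the edge set `F`. -/
def Reach (ends : E → Sym2 V) (F : Finset E) : V → V → Prop :=
  Relation.ReflTransGen fun a b => ∃ e ∈ F, ends e = s(a, b)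

/-- The subgraph with edge set `F` is connected. -/
def ConnectedOn (ends : E → Sym2 V) (F : Finset E) : Prop :=
  ∀ u ∈ support ends F, ∀ v ∈ support ends F, Reach ends F u v

/-- The whole graph is connected. -/
def Connected (ends : E → Sym2 V) : Prop :=
  ∀ u v : V, Reach ends (Finset.univ : Finset E) u v

/-- `F` is the edge set of a circuit (connected, 2-regular; a loop is a circuit). -/
def IsCircuit (ends : E → Sym2 V) (F : Finset E) : Prop :=
  F.Nonempty ∧ ConnectedOn ends F ∧ ∀ v ∈ support ends F, degree ends F v = 2

/-- `F` is the edge set of an Eulerian subgraph (connected, all degrees even). -/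
def IsEulerianOn (ends : E → Sym2 V) (F : Finset E) : Prop :=
  ConnectedOn ends F ∧ ∀ v ∈ support ends F, Even (degree ends F v)

/-- Negative edges of `F` (`sgn e = true` means `e` is negative). -/
def negEdges (sgn : E → Bool) (F : Finset E) : Finset E := F.filter fun e => sgn e = true

def IsBalancedCircuit (ends : E → Sym2 V) (sgn : E → Bool) (F : Finset E) : Prop :=
  IsCircuit ends F ∧ Even (negEdges sgn F).card

def IsUnbalancedCircuit (ends : E → Sym2 V) (sgn : E → Bool) (F : Finset E) : Prop :=
  IsCircuit ends F ∧ Odd (negEdges sgn F).card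

/-- `P` is the edge set of a path with (distinct) end-vertices `u` and `v`. -/
def IsPath (ends : E → Sym2 V) (P : Finset E) (u v : V) : Prop :=
  P.Nonempty ∧ ConnectedOn ends P ∧ u ≠ v ∧
    u ∈ support ends P ∧ v ∈ support ends P ∧
    degree ends P u = 1 ∧ degree ends P v = 1 ∧
    ∀ w ∈ support ends P, w ≠ u → w ≠ v → degree ends P w = 2

/-- A short barbell: two unbalanced circuits meeting at exactly one vertex. -/
def IsShortBarbell (ends : E → Sym2 V) (sgn : E → Bool) (F : Finset E) : Prop :=
  ∃ C₁ C₂ : Finset E, Disjoint C₁ C₂ ∧ F = C₁ ∪ C₂ ∧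
    IsUnbalancedCircuit ends sgn C₁ ∧ IsUnbalancedCircuit ends sgn C₂ ∧
    ∃ v : V, support ends C₁ ∩ support ends C₂ = {v}

/-- A long barbell: two disjoint unbalanced circuits joined by a path meeting
them only at its end-vertices. -/
def IsLongBarbell (ends : E → Sym2 V) (sgn : E → Bool) (F : Finset E) : Prop :=
  ∃ (C₁ C₂ P : Finset E) (u v : V),
    Disjoint C₁ C₂ ∧ Disjoint C₁ P ∧ Disjoint C₂ P ∧ F = C₁ ∪ C₂ ∪ P ∧
    IsUnbalancedCircuit ends sgn C₁ ∧ IsUnbalancedCircuit ends sgn C₂ ∧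
    Disjoint (support ends C₁) (support ends C₂) ∧
    IsPath ends P u v ∧
    support ends P ∩ support ends C₁ = {u} ∧
    support ends P ∩ support ends C₂ = {v}

def IsBarbell (ends : E → Sym2 V) (sgn : E → Bool) (F : Finset E) : Prop :=
  IsShortBarbell ends sgn F ∨ IsLongBarbell ends sgn F

/-- A signed circuit: a balanced circuit, a short barbell or a long barbell. -/
def IsSignedCircuit (ends : E → Sym2 V) (sgn : E → Bool) (F : Finset E) : Prop :=
  IsBalancedCircuit ends sgn F ∨ IsShortBarbell ends sgn F ∨ IsLongBarbell ends sgn F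

/-- `e` is a bridge (cut-edge) of the subgraph with edge set `F`. -/
def IsBridgeIn (ends : E → Sym2 V) (F : Finset E) (e : E) : Prop :=
  e ∈ F ∧ ∀ a b : V, ends e = s(a, b) → ¬ Reach ends (F.erase e) a b

/-- The bridges of the whole graph. -/
def bridges (ends : E → Sym2 V) : Finset E :=
  Finset.univ.filter fun e => IsBridgeIn ends Finset.univ e

/-- The non-bridge edges of the whole graph. -/
def nonbridges (ends : E → Sym2 V) : Finset E := Finset.univ \ bridges ends

/-- Reachability inside `F` avoiding the vertex `x`. -/
def ReachAvoid (ends : E → Sym2 V) (F : Finset E) (x : V) : V → V → Prop :=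
  Relation.ReflTransGen fun a b => a ≠ x ∧ b ≠ x ∧ ∃ e ∈ F, ends e = s(a, b)

/-- `x` is a cut-vertex of the subgraph with edge set `F`. -/
def IsCutVertexOn (ends : E → Sym2 V) (F : Finset E) (x : V) : Prop :=
  ∃ a ∈ support ends F, ∃ b ∈ support ends F,
    a ≠ x ∧ b ≠ x ∧ Reach ends F a b ∧ ¬ ReachAvoid ends F x a b

/-- The subgraph with edge set `F` is 2-connected (connected and without cut-vertices). -/
def TwoConnectedOn (ends : E → Sym2 V) (F : Finset E) : Prop :=
  ConnectedOn ends F ∧ ∀ x : V, ¬ IsCutVertexOn ends F x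

/-- The whole graph is 2-connected. -/
def TwoConnected (ends : E → Sym2 V) : Prop :=
  Connected ends ∧ ∀ x : V, ¬ IsCutVertexOn ends (Finset.univ : Finset E) x

/-- Total length of a collection of subgraphs. -/
def totalLength (𝒞 : List (Finset E)) : ℕ := (𝒞.map Finset.card).sum

/-- The width of the edge `e` with respect to the collection `𝒞`. -/
def widthAt (𝒞 : List (Finset E)) (e : E) : ℕ := (𝒞.filter fun C => e ∈ C).length

/-- `𝒞` covers every edge of the graph. -/
def CoversAll (𝒞 : List (Finset E)) : Prop := ∀ e : E, ∃ C ∈ 𝒞, e ∈ C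

/-- A tree of Eulerian graphs: connected, and after deleting all bridges every
component is Eulerian (equivalently all degrees in the bridgeless part are even). -/
def IsTreeOfEulerian (ends : E → Sym2 V) : Prop :=
  Connected ends ∧ ∀ v : V, Even (degree ends (nonbridges ends) v)

/-- Non-bridge non-loop edges. -/
def nbnl (ends : E → Sym2 V) : Finset E :=
  (nonbridges ends).filter fun e => ¬ IsLoop ends e

/-- A tree of circuits: connected, and after deleting all bridges and loops every
vertex has degree 0 or 2 (each component is an isolated vertex or a circuit). -/
def IsTreeOfCircuits (ends : E → Sym2 V) : Prop :=
  Connected ends ∧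
    ∀ v : V, degree ends (nbnl ends) v = 0 ∨ degree ends (nbnl ends) v = 2

/-- The balloon containing `v`: the edge set of the component of `v` in the
graph of non-bridge non-loop edges. -/
def compBalloon (ends : E → Sym2 V) (v : V) : Finset E :=
  (nbnl ends).filter fun e => ∃ w ∈ ends e, Reach ends (nbnl ends) v w

/-- Valency of the balloon of `v`: the number of bridges and loops incident
with its component. -/
def balloonValency (ends : E → Sym2 V) (v : V) : ℕ :=
  (Finset.univ.filter fun e =>
    (IsBridgeIn ends Finset.univ e ∨ IsLoop ends e) ∧
      ∃ w ∈ ends e, Reach ends (nbnl ends) v w).card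

/-- A balloon consisting of a single negative loop. -/
def IsNegLoopBalloon (ends : E → Sym2 V) (sgn : E → Bool) (B : Finset E) : Prop :=
  ∃ e : E, IsLoop ends e ∧ sgn e = true ∧ B = {e}

/-- A leaf balloon: a negative loop, or a nontrivial balloon of valency 1. -/
def IsLeafBalloon (ends : E → Sym2 V) (sgn : E → Bool) (B : Finset E) : Prop :=
  IsNegLoopBalloon ends sgn B ∨
    ∃ v : V, B = compBalloon ends v ∧ B.Nonempty ∧ balloonValency ends v = 1

/-- A leaf circuit: a negative loop, or a balloon of valency 1 which is a circuit. -/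
def IsLeafCircuit (ends : E → Sym2 V) (sgn : E → Bool) (B : Finset E) : Prop :=
  IsNegLoopBalloon ends sgn B ∨
    ∃ v : V, B = compBalloon ends v ∧ IsCircuit ends B ∧ balloonValency ends v = 1

/-- An inner circuit: a balloon of valency at least 2 which is a circuit. -/
def IsInnerCircuit (ends : E → Sym2 V) (B : Finset E) : Prop :=
  ∃ v : V, B = compBalloon ends v ∧ IsCircuit ends B ∧ 2 ≤ balloonValency ends v

/-- Number of unbalanced circuits of a tree of circuits: negative loops together
with the unbalanced (nontrivial) balloons. -/
def numUnbalancedCircuits (ends : E → Sym2 V) (sgn : E → Bool) : ℕ :=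
  (Finset.univ.filter fun e : E => IsLoop ends e ∧ sgn e = true).card +
    Set.ncard {B : Finset E |
      (∃ v : V, B = compBalloon ends v) ∧ B.Nonempty ∧ Odd (negEdges sgn B).card}

/-- Flow-admissibility: every edge lies in a signed circuit (Bouchet). -/
def FlowAdmissible (ends : E → Sym2 V) (sgn : E → Bool) : Prop :=
  ∀ e : E, ∃ C : Finset E, IsSignedCircuit ends sgn C ∧ e ∈ C

/-- `e` has exactly one end-vertex in `U`. -/
def crosses (ends : E → Sym2 V) (U : Finset V) (e : E) : Prop :=
  ∃ a b : V, ends e = s(a, b) ∧ ((a ∈ U ∧ b ∉ U) ∨ (a ∉ U ∧ b ∈ U))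

/-- Switching the signature at the vertex set `U`. -/
def switch (ends : E → Sym2 V) (U : Finset V) (sgn : E → Bool) : E → Bool :=
  fun e => if crosses ends U e then ! (sgn e) else sgn e

/-- The number of negative edges of a signature. -/
def negCount (sgn : E → Bool) : ℕ := (Finset.univ.filter fun e => sgn e = true).card

/-- `sgn` is a minimum signature: no equivalent (switched) signature has fewer
negative edges. -/
def IsMinSignature (ends : E → Sym2 V) (sgn : E → Bool) : Prop :=
  ∀ U : Finset V, negCount sgn ≤ negCount (switch ends U sgn)

/-- `{e₁, e₂}` is a 2-edge-cut of the subgraph with edge set `F`. -/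
def IsTwoEdgeCut (ends : E → Sym2 V) (F : Finset E) (e₁ e₂ : E) : Prop :=
  e₁ ≠ e₂ ∧ e₁ ∈ F ∧ e₂ ∈ F ∧ ¬ IsBridgeIn ends F e₁ ∧ ¬ IsBridgeIn ends F e₂ ∧
    (∀ a b : V, ends e₁ = s(a, b) → ¬ Reach ends ((F.erase e₁).erase e₂) a b) ∧
    (∀ a b : V, ends e₂ = s(a, b) → ¬ Reach ends ((F.erase e₁).erase e₂) a b)

/-- `b` is a bridge of `F` whose removal leaves two parts which are both unbalanced. -/
def SeparatesUnbalanced (ends : E → Sym2 V) (sgn : E → Bool) (F : Finset E) (b : E) : Prop :=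
  IsBridgeIn ends F b ∧
    ∀ a c : V, ends b = s(a, c) →
      (∃ C ⊆ F.erase b, IsUnbalancedCircuit ends sgn C ∧
        ∃ w ∈ support ends C, Reach ends (F.erase b) a w) ∧
      (∃ C ⊆ F.erase b, IsUnbalancedCircuit ends sgn C ∧
        ∃ w ∈ support ends C, Reach ends (F.erase b) c w)

/-- `T` is a spanning tree of the whole graph: spanning, connected and acyclic. -/
def IsSpanningTree (ends : E → Sym2 V) (T : Finset E) : Prop :=
  (∀ u v : V, Reach ends T u v) ∧ ∀ C ⊆ T, ¬ IsCircuit ends C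


omit [Fintype V] [Fintype E] [DecidableEq V] [DecidableEq E] in
lemma reach_mono {ends : E → Sym2 V} {F F' : Finset E} (h : F ⊆ F') {u v : V}
    (hr : Reach ends F u v) : Reach ends F' u v :=
  by
    unfold Reach at hr ⊢
    induction hr with
    | refl => exact Relation.ReflTransGen.refl
    | tail _ hbc ih =>
      obtain ⟨e, he, hev⟩ := hbc
      exact ih.tail ⟨e, h he, hev⟩

lemma contrib_sum (ends : E → Sym2 V) (f : E) :
    ∑ v : V, (if ends f = Sym2.diag v then 2 else if v ∈ ends f then 1 else 0) = 2 := by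
  obtain ⟨⟨x, y⟩, h⟩ := Quot.exists_rep (ends f)
  have hxy : ends f = s(x, y) := h.symm
  by_cases hd : x = y
  · subst hd
    have : ∀ v : V, (if ends f = Sym2.diag v then 2 else if v ∈ ends f then 1 else 0)
        = if v = x then 2 else 0 := by
      intro v
      by_cases hv : v = x
      · subst hv; simp [hxy, Sym2.diag]
      · rw [if_neg hv, if_neg, if_neg]
        · simp [hxy, Sym2.mem_iff, hv]
        · rw [hxy]; intro hc
          have hvmem : v ∈ Sym2.diag v := by simp [Sym2.diag]
          rw [← hc] at hvmem
          simp [Sym2.mem_iff] at hvmem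
          exact hv hvmem
    rw [Finset.sum_congr rfl (fun v _ => this v),
      Finset.sum_ite_eq' Finset.univ x (fun _ => 2)]
    simp
  · have : ∀ v : V, (if ends f = Sym2.diag v then 2 else if v ∈ ends f then 1 else 0)
        = (if v = x then 1 else 0) + (if v = y then 1 else 0) := by
      intro v
      rw [if_neg]
      · by_cases hv : v = x
        · subst hv; simp [hxy, Sym2.mem_iff, hd]
        · by_cases hv' : v = y
          · subst hv'; simp [hxy, Sym2.mem_iff, hv]
          · simp [hxy, Sym2.mem_iff, hv, hv']
      · rw [hxy]; intro hc
        have : (s(x, y) : Sym2 V).IsDiag := by rw [hc]; exact Sym2.diag_isDiag v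
        rw [Sym2.mk_isDiag_iff] at this
        exact hd this
    rw [Finset.sum_congr rfl (fun v _ => this v), Finset.sum_add_distrib,
      Finset.sum_ite_eq' Finset.univ x (fun _ => 1),
      Finset.sum_ite_eq' Finset.univ y (fun _ => 1)]
    simp

lemma handshake (ends : E → Sym2 V) (F : Finset E) :
    ∑ v : V, degree ends F v = 2 * F.card := by
  simp only [degree]
  rw [Finset.sum_comm, Finset.sum_congr rfl (fun f _ => contrib_sum ends f)]
  simp [mul_comm]

omit [Fintype V] [Fintype E] [DecidableEq V] in
lemma reach_step {ends : E → Sym2 V} {F : Finset E} {f : E} (hf : f ∈ F) {w v : V}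
    (hw : w ∈ ends f) (hv : v ∈ ends f) {a : V} (hR : Reach ends F a w) :
    Reach ends F a v := by
  by_cases hwv : w = v
  · subst hwv; exact hR
  · refine hR.tail ⟨f, hf, ?_⟩
    obtain ⟨⟨x, y⟩, h⟩ := Quot.exists_rep (ends f)
    have hxy : ends f = s(x, y) := h.symm
    rw [hxy] at hw hv ⊢
    rw [Sym2.mem_iff] at hw hv
    rcases hw with rfl | rfl <;> rcases hv with rfl | rfl
    · exact absurd rfl hwv
    · rfl
    · exact Sym2.eq_swap
    · exact absurd rfl hwv

omit [Fintype V] in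
lemma degree_erase_add {ends : E → Sym2 V} {C : Finset E} {e : E} (he : e ∈ C) (v : V) :
    degree ends (C.erase e) v
      + (if ends e = Sym2.diag v then 2 else if v ∈ ends e then 1 else 0)
      = degree ends C v := by
  simp only [degree]
  exact Finset.sum_erase_add C _ he

lemma degree_eq_zero {ends : E → Sym2 V} {C : Finset E} {v : V}
    (h : v ∉ support ends C) : degree ends C v = 0 := by
  simp only [support, Finset.mem_filter, Finset.mem_univ, true_and, not_exists] at h
  push_neg at h
  refine Finset.sum_eq_zero fun f hf => ?_
  have h2 : v ∉ ends f := h f hf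
  have h1 : ends f ≠ Sym2.diag v := fun hc => h2 (by rw [hc]; simp [Sym2.diag])
  rw [if_neg h1, if_neg h2]

lemma circuit_no_bridge {ends : E → Sym2 V} {C : Finset E} (hC : IsCircuit ends C)
    {e : E} (he : e ∈ C) {a b : V} (hab : ends e = s(a, b)) :
    Reach ends (C.erase e) a b := by
  by_cases hd : a = b
  · subst hd; exact Relation.ReflTransGen.refl
  by_contra hnR
  set F := C.erase e with hF
  set R := fun v => Reach ends F a v with hRdef
  set F' := F.filter (fun f => ∃ w ∈ ends f, R w) with hF'
  have hmemR : ∀ f ∈ F', ∀ v ∈ ends f, R v := by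
    intro f hf v hv
    obtain ⟨w, hw, hRw⟩ := (Finset.mem_filter.mp hf).2
    exact reach_step (Finset.mem_filter.mp hf).1 hw hv hRw
  have hdeg : ∀ v : V, degree ends F' v = if R v then degree ends F v else 0 := by
    intro v
    by_cases hRv : R v
    · rw [if_pos hRv]
      simp only [degree]
      refine (Finset.sum_subset (Finset.filter_subset _ _) ?_).symm.symm
      intro f hf hnf
      have h2 : v ∉ ends f := fun hc => hnf (Finset.mem_filter.mpr ⟨hf, v, hc, hRv⟩)
      have h1 : ends f ≠ Sym2.diag v := fun hc => h2 (by rw [hc]; simp [Sym2.diag])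
      rw [if_neg h1, if_neg h2]
    · rw [if_neg hRv]
      refine Finset.sum_eq_zero fun f hf => ?_
      have h2 : v ∉ ends f := fun hc => hRv (hmemR f hf v hc)
      have h1 : ends f ≠ Sym2.diag v := fun hc => h2 (by rw [hc]; simp [Sym2.diag])
      rw [if_neg h1, if_neg h2]
  have hEven : Even (∑ v : V, degree ends F' v) := by
    rw [handshake]; exact ⟨F'.card, two_mul F'.card⟩
  rw [Finset.sum_congr rfl (fun v _ => hdeg v), ← Finset.sum_filter] at hEven
  have haC : a ∈ support ends C := by
    simp only [support, Finset.mem_filter, Finset.mem_univ, true_and]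
    exact ⟨e, he, by rw [hab]; simp⟩
  have hdegCa : degree ends C a = 2 := hC.2.2 a haC
  have hconte : (if ends e = Sym2.diag a then 2 else if a ∈ ends e then 1 else 0) = 1 := by
    have h1 : ends e ≠ Sym2.diag a := by
      rw [hab]; intro hc
      have : (s(a, b) : Sym2 V).IsDiag := by rw [hc]; exact Sym2.diag_isDiag a
      exact hd (Sym2.mk_isDiag_iff.mp this)
    rw [if_neg h1, if_pos (by rw [hab]; simp)]
  have hdegFa : degree ends F a = 1 := by
    have h := degree_erase_add (ends := ends) he a
    rw [hconte, hdegCa] at h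
    rw [hF]
    omega
  have hRa : R a := Relation.ReflTransGen.refl
  have haS : a ∈ Finset.univ.filter R := Finset.mem_filter.mpr ⟨Finset.mem_univ a, hRa⟩
  rw [← Finset.add_sum_erase _ _ haS, hdegFa] at hEven
  have htail : Even (∑ v ∈ (Finset.univ.filter R).erase a, degree ends F v) := by
    refine Finset.even_sum _ fun v hv => ?_
    have hva : v ≠ a := (Finset.mem_erase.mp hv).1
    have hRv : R v := (Finset.mem_filter.mp (Finset.mem_erase.mp hv).2).2
    have hvb : v ≠ b := by rintro rfl; exact hnR hRv
    have h2 : v ∉ ends e := by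
      rw [hab, Sym2.mem_iff]; rintro (rfl | rfl)
      · exact hva rfl
      · exact hvb rfl
    have h1 : ends e ≠ Sym2.diag v := fun hc => h2 (by rw [hc]; simp [Sym2.diag])
    have hdv : degree ends F v = degree ends C v := by
      have h := degree_erase_add (ends := ends) he v
      rw [if_neg h1, if_neg h2] at h
      rw [hF]
      omega
    rw [hdv]
    by_cases hvs : v ∈ support ends C
    · rw [hC.2.2 v hvs]; exact ⟨1, rfl⟩
    · rw [degree_eq_zero hvs]; exact ⟨0, rfl⟩
  exact Nat.not_even_one ((Nat.even_add.mp hEven).mpr htail)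

/-- For `A ⊆ X'`, the symmetric difference `C_A` of the fundamental
circuits contains every edge of `A` and every edge forming a 2-edge-cut with
some edge of `A`. -/
theorem statement12 {V E : Type} [Fintype V] [Fintype E] [DecidableEq V] [DecidableEq E]
    (ends : E → Sym2 V) (sgn : E → Bool)
    (hT : IsSpanningTree ends (Finset.univ.filter fun e => sgn e = false))
    (Cx : E → Finset E)
    (hCx : ∀ x : E, sgn x = true →
      IsCircuit ends (Cx x) ∧
      Cx x ⊆ insert x (Finset.univ.filter fun e => sgn e = false) ∧ x ∈ Cx x)
    (A : Finset E) (hA : ∀ a ∈ A, sgn a = true) :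
    (∀ a ∈ A, a ∈ Finset.univ.filter fun e => Odd (A.filter fun a' => e ∈ Cx a').card) ∧
    (∀ s' a : E, a ∈ A → IsTwoEdgeCut ends Finset.univ s' a →
      s' ∈ Finset.univ.filter fun e => Odd (A.filter fun a' => e ∈ Cx a').card) := by
  have hkey : ∀ x ∈ A, ∀ g ∈ Cx x, sgn g = true → g = x := by
    intro x hx g hg hgs
    have h := (hCx x (hA x hx)).2.1 hg
    rcases Finset.mem_insert.mp h with h | h
    · exact h
    · simp only [Finset.mem_filter] at h
      rw [hgs] at h
      exact absurd h.2 (by simp)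
  constructor
  · intro a ha
    simp only [Finset.mem_filter, Finset.mem_univ, true_and]
    have hfa : A.filter (fun a' => a ∈ Cx a') = {a} := by
      ext b
      simp only [Finset.mem_filter, Finset.mem_singleton]
      constructor
      · rintro ⟨hbA, hb⟩
        exact (hkey b hbA a hb (hA a ha)).symm
      · rintro rfl
        exact ⟨ha, (hCx b (hA b ha)).2.2⟩
    rw [hfa]
    simp
  · intro s' a ha hcut
    simp only [Finset.mem_filter, Finset.mem_univ, true_and]
    obtain ⟨hne, -, -, -, -, hcut1, hcut2⟩ := hcut
    have hfa : A.filter (fun a' => s' ∈ Cx a') = {a} := by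
      ext x
      simp only [Finset.mem_filter, Finset.mem_singleton]
      constructor
      · rintro ⟨hxA, hx⟩
        by_contra hxa
        obtain ⟨⟨p, q⟩, hpq'⟩ := Quot.exists_rep (ends s')
        have hpq : ends s' = s(p, q) := hpq'.symm
        have hreach : Reach ends ((Cx x).erase s') p q :=
          circuit_no_bridge (hCx x (hA x hxA)).1 hx hpq
        refine hcut1 p q hpq (reach_mono ?_ hreach)
        intro f hf
        have hf1 := Finset.mem_of_mem_erase hf
        have hfs : f ≠ s' := Finset.ne_of_mem_erase hf
        have hfa : f ≠ a := by
          intro hfeq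
          have hfx : f = x := hkey x hxA f hf1 (by rw [hfeq]; exact hA a ha)
          exact hxa (hfx.symm.trans hfeq)
        exact Finset.mem_erase.mpr ⟨hfa, Finset.mem_erase.mpr ⟨hfs, Finset.mem_univ f⟩⟩
      · rintro rfl
        refine ⟨ha, ?_⟩
        by_contra hs
        obtain ⟨⟨p, q⟩, hpq'⟩ := Quot.exists_rep (ends x)
        have hpq : ends x = s(p, q) := hpq'.symm
        have hreach : Reach ends ((Cx x).erase x) p q :=
          circuit_no_bridge (hCx x (hA x ha)).1 (hCx x (hA x ha)).2.2 hpq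
        refine hcut2 p q hpq (reach_mono ?_ hreach)
        intro f hf
        have hf1 := Finset.mem_of_mem_erase hf
        have hfx : f ≠ x := Finset.ne_of_mem_erase hf
        have hfs : f ≠ s' := by rintro rfl; exact hs hf1
        exact Finset.mem_erase.mpr ⟨hfx, Finset.mem_erase.mpr ⟨hfs, Finset.mem_univ f⟩⟩
    rw [hfa]
    simp


end SignedCircuitCover
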